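/- arXiv:1411.4253 — 3 statements merged into one kernel-verified Lean document; each statement's English description precedes it below -/
import Mathlib

section
/- Let L, m, n be positive integers with n > m and with L dividing n + m. Let m₁,…,m_L and n₁,…,n_L be nonnegative integers with Σᵢ mᵢ = m, Σᵢ nᵢ = n, and mᵢ + nᵢ = (n+m)/L for every i. Set R = m/n (as a rational number). Then the number of indices i ∈ {1,…,L} satisfying both mᵢ ≤ 2m/L and mᵢ ≤ nᵢ is at least min( (1−R)/(1+R), 1/2 ) · L. -/
/-- Lower bound on the number of non-locally decodable sub-circuits: if a circuit with
`m` input-nodes and `n` output-nodes (with `n > m`) is partitioned into `L` sub-circuits of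
`(n+m)/L` nodes each, then at least a `min((1-R)/(1+R), 1/2)` fraction of the sub-circuits
satisfy both `mᵢ ≤ 2m/L` and `mᵢ ≤ nᵢ`, where `R = m/n`. -/
theorem nonlocally_decodable_fraction
    (L m n : ℕ) (hL : 0 < L) (hm : 0 < m) (hn : 0 < n) (hnm : m < n)
    (hdvd : L ∣ (n + m))
    (mi ni : Fin L → ℕ)
    (hmi : ∑ i, mi i = m) (hni : ∑ i, ni i = n)
    (hsize : ∀ i, mi i + ni i = (n + m) / L)
    (R : ℚ) (hR : R = (m : ℚ) / n) :
    min ((1 - R) / (1 + R)) (1 / 2) * (L : ℚ) ≤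
      ((Finset.univ.filter
        (fun i : Fin L => (mi i : ℚ) ≤ 2 * (m : ℚ) / (L : ℚ) ∧ mi i ≤ ni i)).card : ℚ) := by
  classical
  have hL0 : (0:ℚ) < L := by exact_mod_cast hL
  have hn0 : (0:ℚ) < n := by exact_mod_cast hn
  have hm0 : (0:ℚ) < m := by exact_mod_cast hm
  have hmn : (m:ℚ) < n := by exact_mod_cast hnm
  -- exact sizes in ℚ
  have hsizeQ : ∀ i, (mi i : ℚ) + (ni i : ℚ) = ((n:ℚ) + m) / L := by
    intro i
    have h1 : ((mi i + ni i : ℕ) : ℚ) = (((n + m) / L : ℕ) : ℚ) := by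
      exact_mod_cast congrArg (fun k : ℕ => (k : ℚ)) (hsize i)
    have h2 : (((n + m) / L : ℕ) : ℚ) = ((n + m : ℕ) : ℚ) / (L : ℚ) := by
      rw [Nat.cast_div hdvd (by exact_mod_cast hL.ne')]
    push_cast at h1 h2
    rw [h1, h2]
  set p : Fin L → Prop := fun i => (mi i : ℚ) ≤ 2 * (m : ℚ) / (L : ℚ) ∧ mi i ≤ ni i with hp
  set G := Finset.univ.filter p with hG
  set B := Finset.univ.filter (fun i => ¬ p i) with hB
  have hcard : G.card + B.card = L := by
    rw [hG, hB, Finset.card_filter_add_card_filter_not, Finset.card_univ,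
      Fintype.card_fin]
  set t : ℚ := min (2 * (m:ℚ) / L) (((n:ℚ) + m) / (2 * L)) with ht
  have hBlow : ∀ i ∈ B, t ≤ (mi i : ℚ) := by
    intro i hi
    rw [hB, Finset.mem_filter] at hi
    have hnp : ¬ ((mi i : ℚ) ≤ 2 * (m : ℚ) / (L : ℚ) ∧ mi i ≤ ni i) := hi.2
    push_neg at hnp
    rcases le_or_gt ((mi i : ℚ)) (2 * (m:ℚ) / L) with h | h
    · have hni' : ni i < mi i := hnp h
      have hcast : (ni i : ℚ) < mi i := by exact_mod_cast hni'
      have hs := hsizeQ i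
      have hlt : ((n:ℚ)+m)/L < 2 * mi i := by linarith
      calc t ≤ ((n:ℚ)+m)/(2*L) := min_le_right _ _
        _ ≤ mi i := by
          rw [div_le_iff₀ (by positivity)]
          rw [div_lt_iff₀ (by positivity)] at hlt
          nlinarith
    · exact le_trans (min_le_left _ _) h.le
  have hsum : (B.card : ℚ) * t ≤ m := by
    calc (B.card : ℚ) * t = ∑ _i ∈ B, t := by rw [Finset.sum_const, nsmul_eq_mul]
      _ ≤ ∑ i ∈ B, (mi i : ℚ) := Finset.sum_le_sum hBlow
      _ ≤ ∑ i, (mi i : ℚ) :=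
          Finset.sum_le_sum_of_subset_of_nonneg (Finset.filter_subset _ _)
            (by intros; positivity)
      _ = m := by rw [← Nat.cast_sum, hmi]
  have hBtL : (B.card : ℚ) * t * L ≤ m * L :=
    mul_le_mul_of_nonneg_right hsum hL0.le
  have hGQ : (G.card : ℚ) = L - B.card := by
    have h : ((G.card : ℚ) + B.card) = L := by exact_mod_cast hcard
    linarith
  have hRR : (1 - (m:ℚ)/n) / (1 + (m:ℚ)/n) = ((n:ℚ) - m) / ((n:ℚ) + m) := by
    rw [div_eq_div_iff (by positivity) (by positivity)]
    field_simp
  rw [hGQ, hR, hRR]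
  rcases le_total (2 * (m:ℚ) / L) (((n:ℚ) + m) / (2 * L)) with hcase | hcase
  · -- t = 2m/L, here n ≥ 3m so the min is 1/2
    have ht' : t = 2 * (m:ℚ) / L := min_eq_left hcase
    have h3m : 3 * (m:ℚ) ≤ n := by
      rw [div_le_div_iff₀ (by positivity) (by positivity)] at hcase
      nlinarith
    have hmin : min (((n:ℚ) - m) / ((n:ℚ) + m)) (1/2 : ℚ) = 1/2 := by
      apply min_eq_right
      rw [le_div_iff₀ (by positivity)]
      linarith
    rw [hmin]
    have htl : t * L = 2 * m := by
      rw [ht', div_mul_cancel₀]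
      exact hL0.ne'
    have hB2 : (B.card : ℚ) * (2 * m) ≤ m * L := by
      calc (B.card : ℚ) * (2 * m) = (B.card : ℚ) * t * L := by rw [mul_assoc, htl]
        _ ≤ m * L := hBtL
    nlinarith
  · -- t = (n+m)/(2L), here n ≤ 3m so the min is (n-m)/(n+m)
    have ht' : t = ((n:ℚ) + m) / (2 * L) := min_eq_right hcase
    have h3m : (n:ℚ) ≤ 3 * m := by
      rw [div_le_div_iff₀ (by positivity) (by positivity)] at hcase
      nlinarith
    have hmin : min (((n:ℚ) - m) / ((n:ℚ) + m)) (1/2 : ℚ) = ((n:ℚ) - m) / ((n:ℚ) + m) := by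
      apply min_eq_left
      rw [div_le_iff₀ (by positivity)]
      linarith
    rw [hmin]
    have htl : t * L = ((n:ℚ) + m) / 2 := by
      rw [ht']
      field_simp
    have hB2 : (B.card : ℚ) * ((n:ℚ) + m) ≤ 2 * (m * L) := by
      have : (B.card : ℚ) * (((n:ℚ) + m) / 2) ≤ m * L := by
        rw [← htl, ← mul_assoc]; exact hBtL
      linarith
    rw [div_mul_eq_mul_div, div_le_iff₀ (by positivity)]
    have expand : ((L:ℚ) - B.card) * ((n:ℚ) + m) = (L:ℚ)*(n:ℚ) + (L:ℚ)*(m:ℚ) - (B.card:ℚ)*((n:ℚ)+m) := by ring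
    have expand2 : ((n:ℚ) - m) * L = (L:ℚ)*(n:ℚ) - (L:ℚ)*(m:ℚ) := by ring
    rw [expand, expand2]
    linarith
end

section
/- Let q > 0, U > 0, and k ≥ 1. Let X₁,…,X_k and X̂₁,…,X̂_k be real numbers with 0 < |Xᵢ| ≤ U for every i, let Q ∈ ℝ, and let Q₁,…,Q_k be nonnegative reals such that |Xᵢ − X̂ᵢ| ≥ 2^{−(Qᵢ+1)}·|Xᵢ| for every i. If the relative error satisfies ( Σᵢ |Xᵢ − X̂ᵢ|^q )^{1/q} ≤ 2^{−Q} · ( Σᵢ |Xᵢ|^q )^{1/q}, then Σᵢ Qᵢ ≥ C₀ · k · (Q − 1), where C₀ = ( Σᵢ |Xᵢ|^q ) / ( k·U^q ) ≤ 1. -/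
open Finset

-- tangent line bound: 2^x ≥ 1 + x * log 2
lemma two_rpow_ge_tangent (x : ℝ) : 1 + x * Real.log 2 ≤ (2 : ℝ) ^ x := by
  have h := Real.add_one_le_exp (x * Real.log 2)
  calc 1 + x * Real.log 2 = x * Real.log 2 + 1 := by ring
    _ ≤ Real.exp (x * Real.log 2) := h
    _ = (2 : ℝ) ^ x := by
        rw [Real.rpow_def_of_pos (by norm_num : (0:ℝ) < 2), mul_comm]

/-- Quantization lower bound: if each entry `Xᵢ` (with `0 < |Xᵢ| ≤ U`) is reconstructed as
`X̂ᵢ` with `|Xᵢ − X̂ᵢ| ≥ 2^{−(Qᵢ+1)} |Xᵢ|`, and the relative `ℓ_q` error is at most `2^{−Q}`,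
then the total number of quantization bits satisfies `∑ᵢ Qᵢ ≥ C₀ k (Q − 1)` where
`C₀ = (∑ᵢ |Xᵢ|^q)/(k U^q) ≤ 1`. -/
theorem quantization_bits_lower_bound
    (q U : ℝ) (hq : 0 < q) (hU : 0 < U)
    (k : ℕ) (hk : 1 ≤ k)
    (X Xhat : Fin k → ℝ)
    (hXpos : ∀ i, 0 < |X i|) (hXle : ∀ i, |X i| ≤ U)
    (Q : ℝ) (Qi : Fin k → ℝ) (hQi : ∀ i, 0 ≤ Qi i)
    (hquant : ∀ i, (2 : ℝ) ^ (-(Qi i + 1)) * |X i| ≤ |X i - Xhat i|)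
    (hrel : (∑ i, |X i - Xhat i| ^ q) ^ (1 / q) ≤ (2 : ℝ) ^ (-Q) * (∑ i, |X i| ^ q) ^ (1 / q)) :
    ((∑ i, |X i| ^ q) / (k * U ^ q)) * k * (Q - 1) ≤ ∑ i, Qi i ∧
      (∑ i, |X i| ^ q) / (k * U ^ q) ≤ 1 := by
  set S : ℝ := ∑ i, |X i| ^ q with hS
  have hXq : ∀ i, (0:ℝ) < |X i| ^ q := fun i => Real.rpow_pos_of_pos (hXpos i) q
  have hSpos : 0 < S := Finset.sum_pos (fun i _ => hXq i) (by simp [Finset.univ_nonempty_iff]; exact Fin.pos_iff_nonempty.mp hk)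
  have hEnn : (0:ℝ) ≤ ∑ i, |X i - Xhat i| ^ q :=
    Finset.sum_nonneg fun i _ => Real.rpow_nonneg (abs_nonneg _) q
  have hqne : q ≠ 0 := ne_of_gt hq
  -- raise hrel to the q power
  have hrelq : (∑ i, |X i - Xhat i| ^ q) ≤ (2:ℝ) ^ (-Q * q) * S := by
    have h1 : ((∑ i, |X i - Xhat i| ^ q) ^ (1/q)) ^ q ≤
        ((2:ℝ) ^ (-Q) * S ^ (1/q)) ^ q :=
      Real.rpow_le_rpow (Real.rpow_nonneg hEnn _) hrel hq.le
    rw [one_div, Real.rpow_inv_rpow hEnn hqne,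
      Real.mul_rpow (Real.rpow_nonneg (by norm_num) _) (Real.rpow_nonneg hSpos.le _),
      ← Real.rpow_mul (by norm_num : (0:ℝ) ≤ 2),
      ← Real.rpow_mul hSpos.le, inv_mul_cancel₀ hqne, Real.rpow_one] at h1
    exact h1
  -- pointwise quantization bound raised to the q power
  have hpt : ∀ i, (2:ℝ) ^ (-(Qi i + 1) * q) * |X i| ^ q ≤ |X i - Xhat i| ^ q := by
    intro i
    have := Real.rpow_le_rpow
      (mul_nonneg (Real.rpow_nonneg (by norm_num) _) (abs_nonneg _)) (hquant i) hq.le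
    rwa [Real.mul_rpow (Real.rpow_nonneg (by norm_num) _) (abs_nonneg _),
      ← Real.rpow_mul (by norm_num : (0:ℝ) ≤ 2)] at this
  have hkey : ∑ i, (2:ℝ) ^ (-(Qi i + 1) * q) * |X i| ^ q ≤ (2:ℝ) ^ (-Q * q) * S :=
    le_trans (Finset.sum_le_sum fun i _ => hpt i) hrelq
  -- tangent line trick
  have htan : ∀ i, (2:ℝ) ^ (-Q * q) * ((1 + (Q - Qi i - 1) * q * Real.log 2) * |X i| ^ q)
      ≤ (2:ℝ) ^ (-(Qi i + 1) * q) * |X i| ^ q := by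
    intro i
    have h2 : (2:ℝ) ^ (-(Qi i + 1) * q) = (2:ℝ) ^ (-Q * q) * (2:ℝ) ^ ((Q - Qi i - 1) * q) := by
      rw [← Real.rpow_add (by norm_num : (0:ℝ) < 2)]; ring_nf
    have hconv : 1 + (Q - Qi i - 1) * q * Real.log 2 ≤ (2:ℝ) ^ ((Q - Qi i - 1) * q) := by
      calc 1 + (Q - Qi i - 1) * q * Real.log 2
          = 1 + ((Q - Qi i - 1) * q) * Real.log 2 := by ring
        _ ≤ (2:ℝ) ^ ((Q - Qi i - 1) * q) := two_rpow_ge_tangent _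
    rw [h2, mul_assoc ((2:ℝ) ^ (-Q * q))]
    exact mul_le_mul_of_nonneg_left
      (mul_le_mul_of_nonneg_right hconv (hXq i).le)
      (Real.rpow_nonneg (by norm_num) _)
  have hsum : (2:ℝ) ^ (-Q * q) * ∑ i, (1 + (Q - Qi i - 1) * q * Real.log 2) * |X i| ^ q
      ≤ (2:ℝ) ^ (-Q * q) * S := by
    rw [Finset.mul_sum]
    exact le_trans (Finset.sum_le_sum fun i _ => htan i) hkey
  have hpow2 : (0:ℝ) < (2:ℝ) ^ (-Q * q) := Real.rpow_pos_of_pos (by norm_num) _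
  have hsum2 : ∑ i, (1 + (Q - Qi i - 1) * q * Real.log 2) * |X i| ^ q ≤ S :=
    le_of_mul_le_mul_left hsum hpow2
  -- extract S*(Q-1) ≤ ∑ |X i|^q * Qi i
  have hlog2 : 0 < Real.log 2 := Real.log_pos (by norm_num)
  have hmain : S * (Q - 1) ≤ ∑ i, |X i| ^ q * Qi i := by
    have hexpand : ∑ i, (1 + (Q - Qi i - 1) * q * Real.log 2) * |X i| ^ q
        = S + (q * Real.log 2) * ((S * (Q - 1)) - ∑ i, |X i| ^ q * Qi i) := by
      rw [hS, Finset.sum_mul, ← Finset.sum_sub_distrib, Finset.mul_sum,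
        ← Finset.sum_add_distrib]
      exact Finset.sum_congr rfl fun i _ => by ring
    rw [hexpand] at hsum2
    have h3 : (q * Real.log 2) * ((S * (Q - 1)) - ∑ i, |X i| ^ q * Qi i) ≤ 0 := by linarith
    have h4 : 0 < q * Real.log 2 := mul_pos hq hlog2
    nlinarith [h3, h4]
  have hUq : (0:ℝ) < U ^ q := Real.rpow_pos_of_pos hU q
  have hbd : ∑ i, |X i| ^ q * Qi i ≤ U ^ q * ∑ i, Qi i := by
    rw [Finset.mul_sum]
    exact Finset.sum_le_sum fun i _ =>
      mul_le_mul_of_nonneg_right (Real.rpow_le_rpow (abs_nonneg _) (hXle i) hq.le) (hQi i)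
  have hkpos : (0:ℝ) < (k:ℝ) := by exact_mod_cast Nat.lt_of_lt_of_le Nat.zero_lt_one hk
  constructor
  · have heq : S / ((k:ℝ) * U ^ q) * (k:ℝ) * (Q - 1) = S * (Q - 1) / U ^ q := by
      field_simp
    rw [heq, div_le_iff₀ hUq]
    calc S * (Q - 1) ≤ ∑ i, |X i| ^ q * Qi i := hmain
      _ ≤ U ^ q * ∑ i, Qi i := hbd
      _ = (∑ i, Qi i) * U ^ q := by ring
  · rw [div_le_one (by positivity)]
    calc S ≤ ∑ _i : Fin k, U ^ q :=
        Finset.sum_le_sum fun i _ => Real.rpow_le_rpow (abs_nonneg _) (hXle i) hq.le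
      _ = (k:ℝ) * U ^ q := by simp [Finset.sum_const, mul_comm]
end

section
/- Let ρ > 0 and let S ⊂ ℝ² be a finite set of n points, n ≥ 8, such that any two distinct points of S are at Euclidean distance at least 2ρ from each other. Then for every point x ∈ ℝ², Σ_{y∈S} dist(x, y) ≥ ρ · n^{3/2} / 8. -/
open Metric MeasureTheory ENNReal

lemma packing_lemma (ρ r : ℝ) (hρ : 0 < ρ) (hr : 0 ≤ r)
    (T : Finset (EuclideanSpace ℝ (Fin 2)))
    (hsep : ∀ y ∈ T, ∀ z ∈ T, y ≠ z → 2 * ρ ≤ dist y z)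
    (x : EuclideanSpace ℝ (Fin 2))
    (hT : ∀ y ∈ T, dist x y ≤ r) :
    (T.card : ℝ) * ρ ^ 2 ≤ (r + ρ) ^ 2 := by
  have hdim : Module.finrank ℝ (EuclideanSpace ℝ (Fin 2)) = 2 := by simp
  have hdisj : (T : Set (EuclideanSpace ℝ (Fin 2))).PairwiseDisjoint
      (fun y => ball y ρ) := by
    intro y hy z hz hyz
    exact ball_disjoint_ball (by linarith [hsep y hy z hz hyz])
  have hmeas := measure_biUnion_finset (μ := volume) hdisj
    (fun y _ => measurableSet_ball)
  have hsub : (⋃ y ∈ T, ball y ρ) ⊆ ball x (r + ρ) := by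
    intro w hw
    simp only [Set.mem_iUnion] at hw
    obtain ⟨y, hy, hwy⟩ := hw
    rw [mem_ball] at hwy ⊢
    have := hT y hy
    calc dist w x ≤ dist w y + dist y x := dist_triangle _ _ _
      _ < ρ + r := by rw [dist_comm y x]; linarith
      _ = r + ρ := by ring
  have hle : ∑ y ∈ T, volume (ball y ρ) ≤ volume (ball x (r + ρ)) := by
    rw [← hmeas]; exact measure_mono hsub
  have hball : ∀ y : EuclideanSpace ℝ (Fin 2),
      volume (ball y ρ) = ENNReal.ofReal (ρ ^ 2) * volume (ball (0 : EuclideanSpace ℝ (Fin 2)) 1) := by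
    intro y
    rw [Measure.addHaar_ball volume y hρ.le, hdim]
  have hbig : volume (ball x (r + ρ)) =
      ENNReal.ofReal ((r + ρ) ^ 2) * volume (ball (0 : EuclideanSpace ℝ (Fin 2)) 1) := by
    rw [Measure.addHaar_ball volume x (by linarith), hdim]
  simp only [hball, Finset.sum_const, nsmul_eq_mul, hbig] at hle
  have hV0 : volume (ball (0 : EuclideanSpace ℝ (Fin 2)) 1) ≠ 0 :=
    (measure_ball_pos volume 0 one_pos).ne'
  have hVtop : volume (ball (0 : EuclideanSpace ℝ (Fin 2)) 1) ≠ ⊤ :=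
    measure_ball_lt_top.ne
  rw [← mul_assoc, ENNReal.mul_le_mul_iff_left hV0 hVtop] at hle
  have hle2 : ENNReal.ofReal ((T.card : ℝ) * ρ ^ 2) ≤ ENNReal.ofReal ((r + ρ) ^ 2) := by
    rwa [ENNReal.ofReal_mul (by positivity), ENNReal.ofReal_natCast]
  rw [ENNReal.ofReal_le_ofReal_iff (by positivity)] at hle2
  exact hle2

/-- If `S` is a set of `n ≥ 8` points in the plane which are pairwise at distance at least `2ρ`
(with `ρ > 0`), then the sum of the distances from any point `x` to the points of `S` is at
least `ρ n^{3/2} / 8`. -/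
theorem sum_dist_separated_points
    (ρ : ℝ) (hρ : 0 < ρ)
    (S : Finset (EuclideanSpace ℝ (Fin 2)))
    (hcard : 8 ≤ S.card)
    (hsep : ∀ y ∈ S, ∀ z ∈ S, y ≠ z → 2 * ρ ≤ dist y z)
    (x : EuclideanSpace ℝ (Fin 2)) :
    ρ * (S.card : ℝ) ^ (3 / 2 : ℝ) / 8 ≤ ∑ y ∈ S, dist x y := by
  obtain ⟨n, hn⟩ : ∃ n : ℝ, n = (S.card : ℝ) := ⟨_, rfl⟩
  rw [← hn]
  have hn8 : (8 : ℝ) ≤ n := by rw [hn]; exact_mod_cast hcard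
  obtain ⟨t, htdef⟩ : ∃ t : ℝ, t = Real.sqrt (n / 2) := ⟨_, rfl⟩
  have ht0 : 0 ≤ t := htdef ▸ Real.sqrt_nonneg _
  have ht2 : t ^ 2 = n / 2 := by rw [htdef]; exact Real.sq_sqrt (by linarith)
  have ht : 2 ≤ t := by nlinarith
  obtain ⟨r, hrdef⟩ : ∃ r : ℝ, r = ρ * (t - 1) := ⟨_, rfl⟩
  have hr : 0 ≤ r := by rw [hrdef]; nlinarith
  classical
  obtain ⟨T, hT⟩ : ∃ T, T = S.filter (fun y => dist x y ≤ r) := ⟨_, rfl⟩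
  obtain ⟨U, hU⟩ : ∃ U, U = S.filter (fun y => ¬ dist x y ≤ r) := ⟨_, rfl⟩
  have hTcard : (T.card : ℝ) * ρ ^ 2 ≤ (r + ρ) ^ 2 := by
    apply packing_lemma ρ r hρ hr T
    · intro y hy z hz hyz
      rw [hT] at hy hz
      exact hsep y (Finset.mem_filter.mp hy).1 z (Finset.mem_filter.mp hz).1 hyz
    · intro y hy
      rw [hT] at hy
      exact (Finset.mem_filter.mp hy).2
  have hTle : (T.card : ℝ) ≤ n / 2 := by
    have he : (r + ρ) ^ 2 = ρ ^ 2 * t ^ 2 := by rw [hrdef]; ring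
    rw [he, ht2] at hTcard
    have hρ2 : (0 : ℝ) < ρ ^ 2 := by positivity
    nlinarith
  have hcards : T.card + U.card = S.card := by
    rw [hT, hU]
    exact Finset.card_filter_add_card_filter_not (p := fun y => dist x y ≤ r)
  have hUcard : n / 2 ≤ (U.card : ℝ) := by
    have h : (T.card : ℝ) + (U.card : ℝ) = n := by rw [hn]; exact_mod_cast hcards
    linarith
  have hsum1 : ∑ y ∈ U, dist x y ≤ ∑ y ∈ S, dist x y := by
    apply Finset.sum_le_sum_of_subset_of_nonneg (hU ▸ Finset.filter_subset _ _)
    intro y _ _; exact dist_nonneg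
  have hsum2 : (U.card : ℝ) * r ≤ ∑ y ∈ U, dist x y := by
    have h := Finset.card_nsmul_le_sum U (fun y => dist x y) r (fun y hy => by
      rw [hU] at hy
      have h := (Finset.mem_filter.mp hy).2
      push_neg at h
      exact h.le)
    rwa [nsmul_eq_mul] at h
  have hkey : n / 2 * r ≤ ∑ y ∈ S, dist x y := by
    calc n / 2 * r ≤ (U.card : ℝ) * r := by nlinarith
      _ ≤ ∑ y ∈ U, dist x y := hsum2
      _ ≤ ∑ y ∈ S, dist x y := hsum1
  have hsqrt2 : Real.sqrt 2 ^ 2 = 2 := Real.sq_sqrt (by norm_num)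
  have hsqrt2le : Real.sqrt 2 ≤ 3 / 2 := by
    nlinarith [Real.sqrt_nonneg 2]
  have hsn : Real.sqrt n = Real.sqrt 2 * t := by
    rw [htdef, ← Real.sqrt_mul (by norm_num : (0:ℝ) ≤ 2) (n / 2)]
    congr 1
    ring
  have hrpow : n ^ (3 / 2 : ℝ) = Real.sqrt n ^ 3 := by
    rw [Real.sqrt_eq_rpow, ← Real.rpow_natCast (n ^ (1 / 2 : ℝ)) 3,
      ← Real.rpow_mul (by linarith : (0:ℝ) ≤ n)]
    norm_num
  have hfinal : ρ * n ^ (3 / 2 : ℝ) / 8 ≤ n / 2 * r := by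
    rw [hrpow, hsn, hrdef]
    have hn2 : n = 2 * t ^ 2 := by linarith
    rw [hn2]
    have hcube : (Real.sqrt 2 * t) ^ 3 = 2 * Real.sqrt 2 * t ^ 3 := by
      rw [mul_pow, pow_succ, hsqrt2]
    rw [hcube]
    have h1 : 0 ≤ ρ * (t ^ 2 * (t - 2)) :=
      mul_nonneg hρ.le (mul_nonneg (sq_nonneg t) (by linarith))
    have h2 : 0 ≤ ρ * t ^ 3 * (3 / 2 - Real.sqrt 2) :=
      mul_nonneg (mul_nonneg hρ.le (pow_nonneg ht0 3)) (by linarith)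
    nlinarith [h1, h2]
  linarith
end
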